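/- Let x be an m×m matrix over a commutative ring with xᵀx = I_m, let y be a 2n×2n matrix with yᵀJy = J, and let θ be a 2n×m matrix of odd elements of a supercommutative superalgebra containing that ring. Define A = √(I_m − θ̂θ), B = √(I_{2n} − θθ̂) with θ̂ = θᵀJ. Then the block matrix X with blocks X_{I,I} = xA, X_{I,II} = xθ̂y, X_{II,I} = θ, X_{II,II} = By satisfies the three orthosymplectic relations: (xA)ᵀ(xA) + θᵀJθ = I_m, −(xA)ᵀ(xθ̂y) + θᵀJ(By) = 0, and −(xθ̂y)ᵀ(xθ̂y) + (By)ᵀJ(By) = J. -/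

import Mathlib

noncomputable section

open Matrix

/-- The standard symplectic matrix `J = [[0, Iₙ],[-Iₙ, 0]]`, with entries in `Λ`. -/
def sympJ (n : ℕ) (Λ : Type*) [Ring Λ] :
    Matrix (Fin n ⊕ Fin n) (Fin n ⊕ Fin n) Λ :=
  Matrix.fromBlocks 0 1 (-1) 0

/-- The binomial coefficient `binom(1/2, k)`, the `k`-th Taylor coefficient of `√(1+x)`. -/
def sqrtCoeff (k : ℕ) : ℝ :=
  (∏ i ∈ Finset.range k, ((1 : ℝ) / 2 - (i : ℝ))) / (Nat.factorial k)

/-- The terminating binomial Taylor series `√(1 - M) = Σ_{k<K} binom(1/2,k) (-M)^k`. -/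
def sqrtOneSub {ι : Type*} [Fintype ι] [DecidableEq ι] {Λ : Type*} [Ring Λ]
    [Algebra ℝ Λ] (K : ℕ) (M : Matrix ι ι Λ) : Matrix ι ι Λ :=
  ∑ k ∈ Finset.range K, sqrtCoeff k • (-M) ^ k

/-!
The entries of `θ` span a real subspace `V` of pairwise anticommuting elements, each of square
zero, so every product of more than `2nm` elements of `V` vanishes. The entries of `θ̂θ` and
`θθ̂` lie in `V·V`; hence they commute with one another and both matrices are nilpotent of order
`nm + 1`. The truncated binomial series then squares exactly, `A² = 1 - θ̂θ` and
`B² = 1 - θθ̂`, because `(1 + X)^{1/2}` squares to `1 + X` as a formal power series.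
Anticommutation and `Jᵀ = -J` give `(θ̂θ)ᵀ = θ̂θ` and `(θθ̂)ᵀJ = Jθθ̂`, hence `Aᵀ = A` and
`BᵀJ = JB`, while `θ̂(θθ̂) = (θ̂θ)θ̂` gives `θ̂B = Aθ̂`. Since `x` is orthogonal and `y`
symplectic with central entries, the three relations reduce to `A² + θ̂θ = 1`, `Aθ̂ = θ̂B` and
`J(θθ̂) + JB² = J`.
-/

open Polynomial

section SqrtSeries

variable {ι Λ : Type*} [Fintype ι] [DecidableEq ι] [Ring Λ] [Algebra ℝ Λ]

theorem sqrtCoeff_eq_choose (k : ℕ) : sqrtCoeff k = Ring.choose (1 / 2 : ℝ) k := by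
  rw [Ring.choose_eq_smul, ← aeval_eq_smeval, aeval_def, ← eval_map, descPochhammer_map,
    descPochhammer_eval_eq_prod_range, sqrtCoeff, smul_eq_mul, div_eq_inv_mul]

theorem sqrtOneSub_eq_aeval (K : ℕ) (M : Matrix ι ι Λ) :
    sqrtOneSub K M =
      aeval (-M) (PowerSeries.trunc K (PowerSeries.binomialSeries ℝ (1 / 2 : ℝ))) := by
  rw [aeval_def, PowerSeries.eval₂_trunc_eq_sum_range, sqrtOneSub]
  refine Finset.sum_congr rfl fun k _ => ?_
  rw [PowerSeries.binomialSeries_coeff, smul_eq_mul, mul_one, sqrtCoeff_eq_choose,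
    Algebra.smul_def]

theorem X_pow_dvd_trunc_binomialSeries_half_sq_sub (K : ℕ) :
    X ^ K ∣ PowerSeries.trunc K (PowerSeries.binomialSeries ℝ (1 / 2 : ℝ)) ^ 2 - (1 + X) := by
  set S := PowerSeries.binomialSeries ℝ (1 / 2 : ℝ)
  have hS : S * S = ((1 + X : ℝ[X]) : PowerSeries ℝ) := by
    rw [← PowerSeries.binomialSeries_add, add_halves]
    simpa using PowerSeries.binomialSeries_nat (R := ℝ) (A := ℝ) 1
  rw [X_pow_dvd_iff]
  intro d hd
  rw [coeff_sub, sq, ← coeff_coe, coe_mul,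
    ← PowerSeries.coeff_mul_eq_coeff_trunc_mul_trunc S S hd, hS, coeff_coe, sub_self]

theorem sqrtOneSub_mul_self {K : ℕ} {M : Matrix ι ι Λ} (hM : M ^ K = 0) :
    sqrtOneSub K M * sqrtOneSub K M = 1 - M := by
  obtain ⟨g, hg⟩ := X_pow_dvd_trunc_binomialSeries_half_sq_sub K
  rw [sqrtOneSub_eq_aeval, ← map_mul, ← sq, sub_eq_iff_eq_add'.mp hg]
  simp only [map_add, map_mul, map_pow, aeval_X, map_one, neg_pow M K, hM, mul_zero, zero_mul,
    add_zero, sub_eq_add_neg]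

end SqrtSeries

section Anticommute

variable {R Λ : Type*} [CommSemiring R] [Ring Λ] [Algebra R Λ]

theorem mul_eq_neg_mul_of_mem_span {s : Set Λ} (hs : ∀ a ∈ s, ∀ b ∈ s, a * b = -(b * a))
    {a b : Λ} (ha : a ∈ Submodule.span R s) (hb : b ∈ Submodule.span R s) :
    a * b = -(b * a) := by
  induction ha, hb using Submodule.span_induction₂ with
  | mem_mem x y hx hy => exact hs x hx y hy
  | zero_left => simp
  | zero_right => simp
  | add_left x y z _ _ _ hxz hyz => rw [add_mul, mul_add, hxz, hyz, neg_add]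
  | add_right x y z _ _ _ hxy hxz => rw [mul_add, add_mul, hxy, hxz, neg_add]
  | smul_left r x y _ _ h => rw [smul_mul_assoc, mul_smul_comm, h, smul_neg]
  | smul_right r x y _ _ h => rw [smul_mul_assoc, mul_smul_comm, h, smul_neg]

theorem commute_mul_of_anticomm {u v p : Λ} (hu : u * p = -(p * u)) (hv : v * p = -(p * v)) :
    Commute (u * v) p := by
  calc u * v * p = -(u * p * v) := by rw [mul_assoc, hv, mul_neg, mul_assoc]
    _ = p * (u * v) := by rw [hu, neg_mul, neg_neg, mul_assoc]

theorem commute_of_mem_span_mul_span {s : Set Λ} (hs : ∀ a ∈ s, ∀ b ∈ s, a * b = -(b * a))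
    {a b : Λ} (ha : a ∈ Submodule.span R s * Submodule.span R s)
    (hb : b ∈ Submodule.span R s * Submodule.span R s) : Commute a b := by
  have hanti {a b : Λ} := mul_eq_neg_mul_of_mem_span (R := R) hs (a := a) (b := b)
  refine Submodule.mul_induction_on ha (fun u hu v hv => ?_) fun _ _ => Commute.add_left
  refine Submodule.mul_induction_on hb (fun p hp q hq => ?_) fun _ _ => Commute.add_right
  exact (commute_mul_of_anticomm (hanti hu hp) (hanti hv hp)).mul_right
    (commute_mul_of_anticomm (hanti hu hq) (hanti hv hq))

theorem mul_list_prod_eq_zero {s : Set Λ} (hs : ∀ a ∈ s, ∀ b ∈ s, a * b = -(b * a))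
    (hsq : ∀ a ∈ s, a * a = 0) {a : Λ} (ha : a ∈ s) {L : List Λ} (hL : ∀ b ∈ L, b ∈ s)
    (haL : a ∈ L) : a * L.prod = 0 := by
  induction L with
  | nil => simp at haL
  | cons b T ih =>
    rw [List.prod_cons, ← mul_assoc]
    rcases List.mem_cons.mp haL with rfl | haT
    · rw [hsq a ha, zero_mul]
    · rw [hs a ha b (hL b List.mem_cons_self), neg_mul, mul_assoc,
        ih (fun c hc => hL c (List.mem_cons_of_mem b hc)) haT, mul_zero, neg_zero]

theorem list_prod_eq_zero_of_not_nodup {s : Set Λ} (hs : ∀ a ∈ s, ∀ b ∈ s, a * b = -(b * a))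
    (hsq : ∀ a ∈ s, a * a = 0) {L : List Λ} (hL : ∀ b ∈ L, b ∈ s) (hL' : ¬ L.Nodup) :
    L.prod = 0 := by
  induction L with
  | nil => simp at hL'
  | cons b T ih =>
    have hT : ∀ c ∈ T, c ∈ s := fun c hc => hL c (List.mem_cons_of_mem b hc)
    rw [List.prod_cons]
    by_cases hbT : b ∈ T
    · exact mul_list_prod_eq_zero hs hsq (hL b List.mem_cons_self) hT hbT
    · rw [ih hT (fun hT' => hL' (List.nodup_cons.mpr ⟨hbT, hT'⟩)), mul_zero]

theorem span_pow_eq_bot_of_anticomm {ι : Type*} [Fintype ι] {g : ι → Λ}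
    (hanti : ∀ i j, g i * g j = -(g j * g i)) (hsq : ∀ i, g i * g i = 0) {e : ℕ}
    (he : Fintype.card ι < e) : Submodule.span R (Set.range g) ^ e = ⊥ := by
  rw [Submodule.span_pow, Submodule.span_eq_bot]
  intro a ha
  obtain ⟨f, rfl⟩ := Set.mem_pow.mp ha
  choose idx hidx using fun k => (f k).2
  refine list_prod_eq_zero_of_not_nodup (s := Set.range g) ?_ ?_ ?_ ?_
  · rintro _ ⟨i, rfl⟩ _ ⟨j, rfl⟩
    exact hanti i j
  · rintro _ ⟨i, rfl⟩
    exact hsq i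
  · simp only [List.mem_ofFn]
    rintro _ ⟨k, rfl⟩
    exact (f k).2
  · rw [List.nodup_ofFn]
    intro hf
    obtain ⟨k, l, hkl, hidx'⟩ := Fintype.exists_ne_map_eq_of_card_lt idx (by simpa using he)
    exact hkl (hf (show (f k : Λ) = f l by rw [← hidx k, ← hidx l, hidx']))

end Anticommute

namespace Matrix

section Commute

variable {α β γ R : Type*} [Ring R]

theorem transpose_mul_of_commute [Fintype β] (P : Matrix α β R) (Q : Matrix β γ R)
    (h : ∀ i j k l, Commute (P i j) (Q k l)) : (P * Q)ᵀ = Qᵀ * Pᵀ := by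
  ext i j
  exact Finset.sum_congr rfl fun k _ => (h j k k i).eq

theorem transpose_mul_of_anticommute [Fintype β] (P : Matrix α β R) (Q : Matrix β γ R)
    (h : ∀ i j k l, P i j * Q k l = -(Q k l * P i j)) : (P * Q)ᵀ = -(Qᵀ * Pᵀ) := by
  ext i j
  simp only [transpose_apply, mul_apply, neg_apply, ← Finset.sum_neg_distrib]
  exact Finset.sum_congr rfl fun k _ => h j k k i

theorem transpose_mul_of_central_left [Fintype α] {x : Matrix α α R}
    (hx : ∀ i j c, Commute (x i j) c) (P : Matrix α β R) : (x * P)ᵀ = Pᵀ * xᵀ :=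
  transpose_mul_of_commute _ _ fun i j _ _ => hx i j _

theorem transpose_mul_of_central_right [Fintype α] {y : Matrix α α R}
    (hy : ∀ i j c, Commute (y i j) c) (P : Matrix β α R) : (P * y)ᵀ = yᵀ * Pᵀ :=
  transpose_mul_of_commute _ _ fun _ _ k l => (hy k l _).symm

theorem transpose_mul_mul_of_orthogonal [Fintype α] [DecidableEq α] {x : Matrix α α R}
    (hxc : ∀ i j c, Commute (x i j) c) (hx : xᵀ * x = 1) (P : Matrix α β R)
    (Q : Matrix α γ R) : (x * P)ᵀ * (x * Q) = Pᵀ * Q := by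
  rw [transpose_mul_of_central_left hxc, Matrix.mul_assoc, ← Matrix.mul_assoc xᵀ, hx,
    Matrix.one_mul]

theorem pow_apply_commute [Fintype α] [DecidableEq α] {P : Matrix α α R}
    (h : ∀ i j k l, Commute (P i j) (P k l)) (e : ℕ) (i j k l : α) :
    Commute ((P ^ e) i j) (P k l) := by
  induction e generalizing i j with
  | zero =>
    rw [pow_zero, one_apply]
    split_ifs
    exacts [Commute.one_left _, Commute.zero_left _]
  | succ e ih =>
    rw [pow_succ, mul_apply]
    exact Commute.sum_left _ _ _ fun r _ => (ih i r).mul_left (h r j k l)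

theorem transpose_pow_of_commute [Fintype α] [DecidableEq α] {P : Matrix α α R}
    (h : ∀ i j k l, Commute (P i j) (P k l)) (e : ℕ) : (P ^ e)ᵀ = Pᵀ ^ e := by
  induction e with
  | zero => simp
  | succ e ih =>
    rw [pow_succ, transpose_mul_of_commute _ _ (pow_apply_commute h e), ih, pow_succ']

theorem mul_pow_eq_pow_mul [Fintype α] [Fintype β] [DecidableEq α] [DecidableEq β]
    {U : Matrix β α R} {P : Matrix α α R} {Q : Matrix β β R} (h : U * P = Q * U) (e : ℕ) :
    U * P ^ e = Q ^ e * U := by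
  induction e with
  | zero => simp
  | succ e ih =>
    rw [pow_succ, ← Matrix.mul_assoc, ih, Matrix.mul_assoc, h, ← Matrix.mul_assoc, pow_succ]

end Commute

section EntrySpan

variable {α β γ R Λ : Type*} [CommSemiring R] [Ring Λ] [Algebra R Λ]

theorem mul_apply_mem_mul [Fintype β] {P : Matrix α β Λ} {Q : Matrix β γ Λ}
    {U W : Submodule R Λ} (hP : ∀ i j, P i j ∈ U) (hQ : ∀ i j, Q i j ∈ W) (i : α) (k : γ) :
    (P * Q) i k ∈ U * W :=
  Submodule.sum_mem _ fun j _ => Submodule.mul_mem_mul (hP i j) (hQ j k)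

theorem pow_apply_mem_pow [Fintype α] [DecidableEq α] {P : Matrix α α Λ} {U : Submodule R Λ}
    (hP : ∀ i j, P i j ∈ U) (e : ℕ) (i j : α) : (P ^ e) i j ∈ U ^ e := by
  induction e generalizing i j with
  | zero =>
    rw [pow_zero, pow_zero, one_apply]
    split_ifs
    exacts [Submodule.mem_one.mpr ⟨1, map_one _⟩, zero_mem _]
  | succ e ih => exact mul_apply_mem_mul (fun i j => ih i j) hP i j

theorem pow_eq_zero_of_apply_mem [Fintype α] [DecidableEq α] {P : Matrix α α Λ}
    {U : Submodule R Λ} (hP : ∀ i j, P i j ∈ U) {e : ℕ} (hU : U ^ e = ⊥) : P ^ e = 0 := by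
  ext i j
  simpa [hU] using pow_apply_mem_pow hP e i j

def entrySpan (R : Type*) [CommSemiring R] [Algebra R Λ] (P : Matrix α β Λ) : Submodule R Λ :=
  Submodule.span R (Set.range (Function.uncurry P))

theorem apply_mem_entrySpan (P : Matrix α β Λ) (i : α) (j : β) : P i j ∈ entrySpan R P :=
  Submodule.subset_span ⟨(i, j), rfl⟩

end EntrySpan

def EntriesAnticommute {α β Λ : Type*} [Ring Λ] (θ : Matrix α β Λ) : Prop :=
  ∀ i j k l, θ i j * θ k l = -(θ k l * θ i j)

namespace EntriesAnticommute

variable {α β R Λ : Type*} [Ring Λ] {θ : Matrix α β Λ}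

theorem mul_eq_neg_mul [CommSemiring R] [Algebra R Λ] (hθ : θ.EntriesAnticommute) {a b : Λ}
    (ha : a ∈ θ.entrySpan R) (hb : b ∈ θ.entrySpan R) : a * b = -(b * a) :=
  mul_eq_neg_mul_of_mem_span (by rintro _ ⟨⟨i, j⟩, rfl⟩ _ ⟨⟨k, l⟩, rfl⟩; exact hθ i j k l) ha hb

theorem commute_of_mem_entrySpan_sq [CommSemiring R] [Algebra R Λ] (hθ : θ.EntriesAnticommute)
    {a b : Λ} (ha : a ∈ θ.entrySpan R * θ.entrySpan R)
    (hb : b ∈ θ.entrySpan R * θ.entrySpan R) : Commute a b :=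
  commute_of_mem_span_mul_span (by rintro _ ⟨⟨i, j⟩, rfl⟩ _ ⟨⟨k, l⟩, rfl⟩; exact hθ i j k l)
    ha hb

theorem entrySpan_pow_eq_bot [Fintype α] [Fintype β] [Algebra ℝ Λ] (hθ : θ.EntriesAnticommute)
    {e : ℕ} (he : Fintype.card α * Fintype.card β < e) : θ.entrySpan ℝ ^ e = ⊥ := by
  have := IsAddTorsionFree.of_isTorsionFree ℝ Λ
  refine span_pow_eq_bot_of_anticomm (fun p q => hθ p.1 p.2 q.1 q.2)
    (fun p => self_eq_neg.mp (hθ p.1 p.2 p.1 p.2)) ?_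
  rwa [Fintype.card_prod]

end EntriesAnticommute

end Matrix

section SqrtOneSub

variable {ι κ Λ : Type*} [Fintype ι] [DecidableEq ι] [Fintype κ] [DecidableEq κ] [Ring Λ]
  [Algebra ℝ Λ]

theorem sqrtOneSub_transpose (K : ℕ) {M : Matrix ι ι Λ}
    (h : ∀ i j k l, Commute (M i j) (M k l)) :
    (sqrtOneSub K M)ᵀ = sqrtOneSub K Mᵀ := by
  have h' : ∀ i j k l, Commute ((-M) i j) ((-M) k l) := fun i j k l =>
    (h i j k l).neg_left.neg_right
  simp only [sqrtOneSub, Matrix.transpose_sum, Matrix.transpose_smul,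
    Matrix.transpose_pow_of_commute h', Matrix.transpose_neg]

theorem mul_sqrtOneSub_eq_sqrtOneSub_mul {U : Matrix κ ι Λ} {P : Matrix ι ι Λ}
    {Q : Matrix κ κ Λ} (h : U * P = Q * U) (K : ℕ) :
    U * sqrtOneSub K P = sqrtOneSub K Q * U := by
  have h' : U * -P = -Q * U := by rw [Matrix.mul_neg, h, Matrix.neg_mul]
  simp only [sqrtOneSub, Matrix.mul_sum, Matrix.sum_mul, Matrix.mul_smul, Matrix.smul_mul,
    Matrix.mul_pow_eq_pow_mul h']

end SqrtOneSub

section SympJ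

variable {n : ℕ} {Λ : Type*} [Ring Λ]

theorem sympJ_apply_mem_one (R : Type*) [CommRing R] [Algebra R Λ] (i j : Fin n ⊕ Fin n) :
    sympJ n Λ i j ∈ (1 : Submodule R Λ) := by
  have hI : ∀ i j : Fin n, (1 : Matrix (Fin n) (Fin n) Λ) i j ∈ (1 : Submodule R Λ) := by
    intro i j
    rw [one_apply]
    split_ifs
    exacts [Submodule.mem_one.mpr ⟨1, map_one _⟩, zero_mem _]
  rcases i with i | i <;> rcases j with j | j
  · exact zero_mem _
  · exact hI i j
  · exact neg_mem (hI i j)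
  · exact zero_mem _

theorem sympJ_apply_commute (i j : Fin n ⊕ Fin n) (c : Λ) : Commute (sympJ n Λ i j) c := by
  obtain ⟨r, hr⟩ := Submodule.mem_one.mp (sympJ_apply_mem_one (Λ := Λ) ℤ i j)
  exact hr ▸ Algebra.commutes r c

theorem sympJ_transpose : (sympJ n Λ)ᵀ = -sympJ n Λ := by
  simp [sympJ, fromBlocks_transpose, fromBlocks_neg]

theorem transpose_hat {m : ℕ} (θ : Matrix (Fin n ⊕ Fin n) (Fin m) Λ) :
    (θᵀ * sympJ n Λ)ᵀ = -(sympJ n Λ * θ) := by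
  rw [Matrix.transpose_mul_of_commute _ _ fun i j k l => (sympJ_apply_commute k l _).symm,
    sympJ_transpose, transpose_transpose, Matrix.neg_mul]

end SympJ

/-! In the names below, `hat` stands for `θ̂ = θᵀ * sympJ n Λ`. -/

section OddMatrix

variable {m n : ℕ} {Λ : Type*} [Ring Λ] [Algebra ℝ Λ] {θ : Matrix (Fin n ⊕ Fin n) (Fin m) Λ}

theorem hat_apply_mem_entrySpan (i : Fin m) (j : Fin n ⊕ Fin n) :
    (θᵀ * sympJ n Λ) i j ∈ θ.entrySpan ℝ := by
  simpa using Matrix.mul_apply_mem_mul (P := θᵀ) (fun i j => θ.apply_mem_entrySpan j i)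
    (sympJ_apply_mem_one ℝ) i j

theorem hat_mul_apply_mem (i j : Fin m) :
    (θᵀ * sympJ n Λ * θ) i j ∈ θ.entrySpan ℝ * θ.entrySpan ℝ :=
  Matrix.mul_apply_mem_mul hat_apply_mem_entrySpan θ.apply_mem_entrySpan i j

theorem mul_hat_apply_mem (i j : Fin n ⊕ Fin n) :
    (θ * (θᵀ * sympJ n Λ)) i j ∈ θ.entrySpan ℝ * θ.entrySpan ℝ :=
  Matrix.mul_apply_mem_mul θ.apply_mem_entrySpan hat_apply_mem_entrySpan i j

theorem entrySpan_sq_pow_eq_bot (hθ : θ.EntriesAnticommute) :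
    (θ.entrySpan ℝ * θ.entrySpan ℝ) ^ (n * m + 1) = ⊥ := by
  rw [← sq, ← pow_mul]
  refine hθ.entrySpan_pow_eq_bot ?_
  simp only [Fintype.card_sum, Fintype.card_fin]
  linarith

theorem hat_mul_pow_eq_zero (hθ : θ.EntriesAnticommute) :
    (θᵀ * sympJ n Λ * θ) ^ (n * m + 1) = 0 :=
  Matrix.pow_eq_zero_of_apply_mem hat_mul_apply_mem (entrySpan_sq_pow_eq_bot hθ)

theorem mul_hat_pow_eq_zero (hθ : θ.EntriesAnticommute) :
    (θ * (θᵀ * sympJ n Λ)) ^ (n * m + 1) = 0 :=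
  Matrix.pow_eq_zero_of_apply_mem mul_hat_apply_mem (entrySpan_sq_pow_eq_bot hθ)

theorem hat_mul_transpose (hθ : θ.EntriesAnticommute) :
    (θᵀ * sympJ n Λ * θ)ᵀ = θᵀ * sympJ n Λ * θ := by
  rw [Matrix.transpose_mul_of_anticommute _ _ fun i j k l =>
      hθ.mul_eq_neg_mul (hat_apply_mem_entrySpan i j) (θ.apply_mem_entrySpan k l),
    transpose_hat, Matrix.mul_neg, neg_neg, Matrix.mul_assoc]

theorem mul_hat_transpose (hθ : θ.EntriesAnticommute) :
    (θ * (θᵀ * sympJ n Λ))ᵀ = sympJ n Λ * θ * θᵀ := by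
  rw [Matrix.transpose_mul_of_anticommute _ _ fun i j k l =>
      hθ.mul_eq_neg_mul (θ.apply_mem_entrySpan i j) (hat_apply_mem_entrySpan k l),
    transpose_hat, Matrix.neg_mul, neg_neg]

theorem sqrtOneSub_hat_mul_transpose (hθ : θ.EntriesAnticommute) (K : ℕ) :
    (sqrtOneSub K (θᵀ * sympJ n Λ * θ))ᵀ = sqrtOneSub K (θᵀ * sympJ n Λ * θ) := by
  rw [sqrtOneSub_transpose K fun i j k l =>
      hθ.commute_of_mem_entrySpan_sq (hat_mul_apply_mem i j) (hat_mul_apply_mem k l),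
    hat_mul_transpose hθ]

theorem sqrtOneSub_mul_hat_transpose_mul_sympJ (hθ : θ.EntriesAnticommute) (K : ℕ) :
    (sqrtOneSub K (θ * (θᵀ * sympJ n Λ)))ᵀ * sympJ n Λ
      = sympJ n Λ * sqrtOneSub K (θ * (θᵀ * sympJ n Λ)) := by
  rw [sqrtOneSub_transpose K fun i j k l =>
      hθ.commute_of_mem_entrySpan_sq (mul_hat_apply_mem i j) (mul_hat_apply_mem k l)]
  refine (mul_sqrtOneSub_eq_sqrtOneSub_mul ?_ K).symm
  rw [mul_hat_transpose hθ]
  simp only [Matrix.mul_assoc]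

end OddMatrix

/-- with `x` orthogonal and `y` symplectic (with central, i.e. "even
scalar", entries), `θ` a matrix of odd anticommuting elements, `θ̂ = θᵀJ`,
`A = √(I_m − θ̂θ)`, `B = √(I_{2n} − θθ̂)`, the block matrix with blocks
`xA, xθ̂y, θ, By` satisfies the three orthosymplectic relations. -/
theorem osp_embedding_relations (m n : ℕ) (Λ : Type*) [Ring Λ] [Algebra ℝ Λ]
    (x : Matrix (Fin m) (Fin m) Λ)
    (y : Matrix (Fin n ⊕ Fin n) (Fin n ⊕ Fin n) Λ)
    (θ : Matrix (Fin n ⊕ Fin n) (Fin m) Λ)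
    (hxc : ∀ i j (c : Λ), Commute (x i j) c)
    (hyc : ∀ i j (c : Λ), Commute (y i j) c)
    (hx : xᵀ * x = 1)
    (hy : yᵀ * sympJ n Λ * y = sympJ n Λ)
    (hodd : ∀ i j k l, θ i j * θ k l = -(θ k l * θ i j)) :
    ∀ A B, A = sqrtOneSub (n * m + 1) ((θᵀ * sympJ n Λ) * θ) →
      B = sqrtOneSub (n * m + 1) (θ * (θᵀ * sympJ n Λ)) →
      (x * A)ᵀ * (x * A) + θᵀ * sympJ n Λ * θ = 1
      ∧ -((x * A)ᵀ * (x * (θᵀ * sympJ n Λ) * y)) + θᵀ * sympJ n Λ * (B * y) = 0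
      ∧ -((x * (θᵀ * sympJ n Λ) * y)ᵀ * (x * (θᵀ * sympJ n Λ) * y))
          + (B * y)ᵀ * sympJ n Λ * (B * y) = sympJ n Λ := by
  intro A B hA hB
  have hA2 : A * A = 1 - θᵀ * sympJ n Λ * θ := hA ▸ sqrtOneSub_mul_self (hat_mul_pow_eq_zero hodd)
  have hB2 : B * B = 1 - θ * (θᵀ * sympJ n Λ) := hB ▸ sqrtOneSub_mul_self (mul_hat_pow_eq_zero hodd)
  have hAT : Aᵀ = A := hA ▸ sqrtOneSub_hat_mul_transpose hodd _
  have hBJ : Bᵀ * sympJ n Λ = sympJ n Λ * B := hB ▸ sqrtOneSub_mul_hat_transpose_mul_sympJ hodd _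
  have hhatB : θᵀ * sympJ n Λ * B = A * (θᵀ * sympJ n Λ) := hA ▸ hB ▸
    mul_sqrtOneSub_eq_sqrtOneSub_mul (Matrix.mul_assoc _ θ (θᵀ * sympJ n Λ)).symm _
  simp only [Matrix.mul_assoc x, Matrix.transpose_mul_mul_of_orthogonal hxc hx, hAT]
  refine ⟨by rw [hA2, sub_add_cancel], ?_, ?_⟩
  · rw [← Matrix.mul_assoc A, ← Matrix.mul_assoc (θᵀ * sympJ n Λ), hhatB, neg_add_cancel]
  · calc _ = yᵀ * (sympJ n Λ * (θ * (θᵀ * sympJ n Λ)) + Bᵀ * sympJ n Λ * B) * y := by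
          rw [Matrix.transpose_mul_of_central_right hyc,
            Matrix.transpose_mul_of_central_right hyc, transpose_hat]
          simp only [Matrix.mul_add, Matrix.add_mul, Matrix.mul_assoc, Matrix.neg_mul,
            Matrix.mul_neg, neg_neg]
      _ = yᵀ * sympJ n Λ * y := by
          rw [hBJ, Matrix.mul_assoc (sympJ n Λ), hB2, Matrix.mul_sub, Matrix.mul_one,
            add_sub_cancel]
      _ = sympJ n Λ := hy
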